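/- Under the setup of the alternating minimization for F(X1, C, B, D) = ‖(A1 − X1) ⊙ W1‖_F² + ‖A2 − X1C − BD‖_F² (sequences (X1)_p, C_p, B_p, D_p satisfying the first-order stationarity equations of the update rules, m_p = F((X1)_p, C_p, B_p, D_p)), the following series converge: Σ_{p=1}^∞ ‖B_{p+1}D_{p+1} − B_pD_p‖_F² < ∞ and Σ_{p=1}^∞ ‖((X1)_p − (X1)_{p+1}) ⊙ W1‖_F² < ∞; in particular, with λ = min_{i,j}(W1)_{ij} > 0, Σ_{p=1}^∞ ‖(X1)_p − (X1)_{p+1}‖_F² < ∞. -/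
import Mathlib


open Matrix Filter Topology

noncomputable def frob {α β : Type*} [Fintype α] [Fintype β] (M : Matrix α β ℝ) : ℝ :=
  Real.sqrt (∑ i, ∑ j, (M i j) ^ 2)

noncomputable def projCol {m k : ℕ} (B : Matrix (Fin m) (Fin k) ℝ) :
    Matrix (Fin m) (Fin m) ℝ :=
  B * (Bᵀ * B)⁻¹ * Bᵀ

section helpers

noncomputable def fsq {α β : Type*} [Fintype α] [Fintype β] (M : Matrix α β ℝ) : ℝ :=
  ∑ i, ∑ j, (M i j) ^ 2

noncomputable def ipm {α β : Type*} [Fintype α] [Fintype β] (M N : Matrix α β ℝ) : ℝ :=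
  ∑ i, ∑ j, M i j * N i j

variable {α β γ : Type*} [Fintype α] [Fintype β] [Fintype γ]

lemma fsq_nonneg (M : Matrix α β ℝ) : 0 ≤ fsq M :=
  Finset.sum_nonneg fun _ _ => Finset.sum_nonneg fun _ _ => sq_nonneg _

lemma frob_sq (M : Matrix α β ℝ) : frob M ^ 2 = fsq M := by
  rw [frob]; exact Real.sq_sqrt (fsq_nonneg M)

lemma fsq_sub (X Y : Matrix α β ℝ) : fsq (X - Y) = fsq X - 2 * ipm X Y + fsq Y := by
  unfold fsq ipm
  simp only [Matrix.sub_apply]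
  rw [Finset.mul_sum, ← Finset.sum_sub_distrib, ← Finset.sum_add_distrib]
  refine Finset.sum_congr rfl fun i _ => ?_
  rw [Finset.mul_sum, ← Finset.sum_sub_distrib, ← Finset.sum_add_distrib]
  exact Finset.sum_congr rfl fun j _ => by ring

lemma fsq_add_le (X Y : Matrix α β ℝ) : fsq (X + Y) ≤ 2 * fsq X + 2 * fsq Y := by
  unfold fsq
  rw [Finset.mul_sum, Finset.mul_sum, ← Finset.sum_add_distrib]
  refine Finset.sum_le_sum fun i _ => ?_
  rw [Finset.mul_sum, Finset.mul_sum, ← Finset.sum_add_distrib]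
  refine Finset.sum_le_sum fun j _ => ?_
  simp only [Matrix.add_apply]
  nlinarith [sq_nonneg (X i j - Y i j)]

lemma fsq_neg (M : Matrix α β ℝ) : fsq (-M) = fsq M := by
  unfold fsq; simp

lemma ipm_eq_trace (M N : Matrix α β ℝ) : ipm M N = Matrix.trace (Mᵀ * N) := by
  unfold ipm
  rw [Finset.sum_comm]
  simp [Matrix.trace, Matrix.mul_apply, Matrix.diag]

lemma ipm_neg_left (M N : Matrix α β ℝ) : ipm (-M) N = -ipm M N := by
  unfold ipm; simp

lemma ipm_zero_left (N : Matrix α β ℝ) : ipm (0 : Matrix α β ℝ) N = 0 := by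
  unfold ipm; simp

lemma ipm_had (P Q W : Matrix α β ℝ) :
    ipm (P ⊙ W) (Q ⊙ W) = ipm ((P ⊙ W) ⊙ W) Q := by
  unfold ipm
  refine Finset.sum_congr rfl fun i _ => Finset.sum_congr rfl fun j _ => ?_
  simp [Matrix.hadamard]; ring

lemma ipm_mulright (R : Matrix α β ℝ) (Δ : Matrix α γ ℝ) (Cc : Matrix γ β ℝ) :
    ipm R (Δ * Cc) = ipm (R * Ccᵀ) Δ := by
  rw [ipm_eq_trace, ipm_eq_trace, Matrix.transpose_mul, Matrix.transpose_transpose,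
    ← Matrix.mul_assoc, Matrix.trace_mul_comm (Rᵀ * Δ) Cc, Matrix.mul_assoc]

lemma ipm_mulleft (R : Matrix α β ℝ) (Xm : Matrix α γ ℝ) (Δ : Matrix γ β ℝ) :
    ipm R (Xm * Δ) = ipm (Xmᵀ * R) Δ := by
  rw [ipm_eq_trace, ipm_eq_trace, Matrix.transpose_mul, Matrix.transpose_transpose,
    Matrix.mul_assoc]

omit [Fintype α] [Fintype β] in
lemma had_sub (U V W : Matrix α β ℝ) : (U - V) ⊙ W = U ⊙ W - V ⊙ W := by
  ext i j; simp [Matrix.hadamard, sub_mul]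

omit [Fintype α] [Fintype β] in
lemma had_neg (P W : Matrix α β ℝ) : (-P) ⊙ W = -(P ⊙ W) := by
  ext i j; simp [Matrix.hadamard]

end helpers

/-- **Theorem 4.3 (i).** The series `Σ ‖B_{p+1}D_{p+1} − B_pD_p‖_F²` and
`Σ ‖((X1)_p − (X1)_{p+1}) ⊙ W1‖_F²` converge; in particular (since the entries of `W1` are
bounded below by `λ = min_{i,j}(W1)_{ij} > 0`) so does `Σ ‖(X1)_p − (X1)_{p+1}‖_F²`. -/
theorem stmt_15
    {m k l s : ℕ}
    (A1 : Matrix (Fin m) (Fin k) ℝ) (A2 : Matrix (Fin m) (Fin l) ℝ)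
    (W1 : Matrix (Fin m) (Fin k) ℝ) (hW1 : ∀ i j, 0 < W1 i j)
    (X1 : ℕ → Matrix (Fin m) (Fin k) ℝ) (C : ℕ → Matrix (Fin k) (Fin l) ℝ)
    (B : ℕ → Matrix (Fin m) (Fin s) ℝ) (D : ℕ → Matrix (Fin s) (Fin l) ℝ)
    (mseq : ℕ → ℝ)
    (hm : ∀ p, mseq p = frob (Matrix.hadamard (A1 - X1 p) W1) ^ 2 +
      frob (A2 - X1 p * C p - B p * D p) ^ 2)
    (heq1 : ∀ p, Matrix.hadamard (Matrix.hadamard (X1 (p + 1) - A1) W1) W1 =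
      (A2 - X1 (p + 1) * C p - B p * D p) * (C p)ᵀ)
    (heq2 : ∀ p, (X1 (p + 1))ᵀ * (A2 - X1 (p + 1) * C (p + 1) - B p * D p) = 0)
    (heq3 : ∀ p, (A2 - X1 (p + 1) * C (p + 1) - B (p + 1) * D p) * (D p)ᵀ = 0)
    (heq4 : ∀ p, (B (p + 1))ᵀ * (A2 - X1 (p + 1) * C (p + 1) - B (p + 1) * D (p + 1)) = 0)
    :
    Summable (fun p => frob (B (p + 1) * D (p + 1) - B p * D p) ^ 2) ∧
    Summable (fun p => frob (Matrix.hadamard (X1 p - X1 (p + 1)) W1) ^ 2) ∧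
    Summable (fun p => frob (X1 p - X1 (p + 1)) ^ 2) := by
  -- the five per-step decrease terms
  set e1 : ℕ → ℝ := fun p => fsq ((X1 p - X1 (p + 1)) ⊙ W1) with he1
  set e2 : ℕ → ℝ := fun p => fsq ((X1 p - X1 (p + 1)) * C p) with he2
  set e3 : ℕ → ℝ := fun p => fsq (X1 (p + 1) * (C p - C (p + 1))) with he3
  set e4 : ℕ → ℝ := fun p => fsq ((B p - B (p + 1)) * D p) with he4
  set e5 : ℕ → ℝ := fun p => fsq (B (p + 1) * (D p - D (p + 1))) with he5
  have key : ∀ p, mseq p = mseq (p + 1) + e1 p + e2 p + e3 p + e4 p + e5 p := by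
    intro p
    have id1 : A1 - X1 p = (A1 - X1 (p + 1)) - (X1 p - X1 (p + 1)) := by abel
    have id2 : A2 - X1 p * C p - B p * D p =
        (A2 - X1 (p + 1) * C p - B p * D p) - (X1 p - X1 (p + 1)) * C p := by
      rw [Matrix.sub_mul]; abel
    have id3 : A2 - X1 (p + 1) * C p - B p * D p =
        (A2 - X1 (p + 1) * C (p + 1) - B p * D p) - X1 (p + 1) * (C p - C (p + 1)) := by
      rw [Matrix.mul_sub]; abel
    have id4 : A2 - X1 (p + 1) * C (p + 1) - B p * D p =
        (A2 - X1 (p + 1) * C (p + 1) - B (p + 1) * D p) - (B p - B (p + 1)) * D p := by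
      rw [Matrix.sub_mul]; abel
    have id5 : A2 - X1 (p + 1) * C (p + 1) - B (p + 1) * D p =
        (A2 - X1 (p + 1) * C (p + 1) - B (p + 1) * D (p + 1))
          - B (p + 1) * (D p - D (p + 1)) := by
      rw [Matrix.mul_sub]; abel
    -- cross terms vanish
    have cross1 : ipm ((A1 - X1 (p + 1)) ⊙ W1) ((X1 p - X1 (p + 1)) ⊙ W1)
        + ipm (A2 - X1 (p + 1) * C p - B p * D p) ((X1 p - X1 (p + 1)) * C p) = 0 := by
      rw [ipm_had, ipm_mulright]
      have : ((A1 - X1 (p + 1)) ⊙ W1) ⊙ W1 =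
          -((A2 - X1 (p + 1) * C p - B p * D p) * (C p)ᵀ) := by
        rw [← heq1 p, ← neg_sub (X1 (p + 1)) A1, had_neg, had_neg]
      rw [this, ipm_neg_left]
      ring
    have cross2 : ipm (A2 - X1 (p + 1) * C (p + 1) - B p * D p)
        (X1 (p + 1) * (C p - C (p + 1))) = 0 := by
      rw [ipm_mulleft, heq2 p, ipm_zero_left]
    have cross3 : ipm (A2 - X1 (p + 1) * C (p + 1) - B (p + 1) * D p)
        ((B p - B (p + 1)) * D p) = 0 := by
      rw [ipm_mulright, heq3 p, ipm_zero_left]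
    have cross4 : ipm (A2 - X1 (p + 1) * C (p + 1) - B (p + 1) * D (p + 1))
        (B (p + 1) * (D p - D (p + 1))) = 0 := by
      rw [ipm_mulleft, heq4 p, ipm_zero_left]
    have step1 : fsq ((A1 - X1 p) ⊙ W1) + fsq (A2 - X1 p * C p - B p * D p) =
        fsq ((A1 - X1 (p + 1)) ⊙ W1) + fsq (A2 - X1 (p + 1) * C p - B p * D p)
          + e1 p + e2 p := by
      rw [id1, id2, had_sub, fsq_sub, fsq_sub, he1, he2]
      dsimp only
      linarith [cross1]
    have step2 : fsq (A2 - X1 (p + 1) * C p - B p * D p) =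
        fsq (A2 - X1 (p + 1) * C (p + 1) - B p * D p) + e3 p := by
      rw [id3, fsq_sub, he3]; dsimp only; linarith [cross2]
    have step3 : fsq (A2 - X1 (p + 1) * C (p + 1) - B p * D p) =
        fsq (A2 - X1 (p + 1) * C (p + 1) - B (p + 1) * D p) + e4 p := by
      rw [id4, fsq_sub, he4]; dsimp only; linarith [cross3]
    have step4 : fsq (A2 - X1 (p + 1) * C (p + 1) - B (p + 1) * D p) =
        fsq (A2 - X1 (p + 1) * C (p + 1) - B (p + 1) * D (p + 1)) + e5 p := by
      rw [id5, fsq_sub, he5]; dsimp only; linarith [cross4]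
    have hmp := hm p
    have hmp1 := hm (p + 1)
    rw [frob_sq, frob_sq] at hmp hmp1
    rw [hmp, hmp1]
    rw [step1, step2, step3, step4]
    ring
  have e_nonneg : ∀ p, 0 ≤ e1 p ∧ 0 ≤ e2 p ∧ 0 ≤ e3 p ∧ 0 ≤ e4 p ∧ 0 ≤ e5 p :=
    fun p => ⟨fsq_nonneg _, fsq_nonneg _, fsq_nonneg _, fsq_nonneg _, fsq_nonneg _⟩
  have mseq_nonneg : ∀ p, 0 ≤ mseq p := by
    intro p; rw [hm p]; positivity
  -- the telescoping differences are summable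
  have hd : Summable (fun p => mseq p - mseq (p + 1)) := by
    apply summable_of_sum_range_le (c := mseq 0)
    · intro p
      obtain ⟨h1, h2, h3, h4, h5⟩ := e_nonneg p
      have := key p
      linarith
    · intro n
      rw [Finset.sum_range_sub' mseq n]
      linarith [mseq_nonneg n]
  have hdiff_ge : ∀ p, mseq p - mseq (p + 1) = e1 p + e2 p + e3 p + e4 p + e5 p := by
    intro p; have := key p; linarith
  -- second series
  have h2 : Summable (fun p => fsq ((X1 p - X1 (p + 1)) ⊙ W1)) := by
    refine Summable.of_nonneg_of_le (fun p => fsq_nonneg _) (fun p => ?_) hd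
    obtain ⟨h1, h2', h3, h4, h5⟩ := e_nonneg p
    have := hdiff_ge p
    simp only [he1] at this ⊢
    linarith
  -- first series
  have h1 : Summable (fun p => fsq (B (p + 1) * D (p + 1) - B p * D p)) := by
    refine Summable.of_nonneg_of_le (fun p => fsq_nonneg _) (fun p => ?_) (hd.mul_left 2)
    have idbd : B (p + 1) * D (p + 1) - B p * D p =
        (-(B (p + 1) * (D p - D (p + 1)))) + (-((B p - B (p + 1)) * D p)) := by
      rw [Matrix.mul_sub, Matrix.sub_mul]; abel
    calc fsq (B (p + 1) * D (p + 1) - B p * D p)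
        ≤ 2 * fsq (-(B (p + 1) * (D p - D (p + 1)))) + 2 * fsq (-((B p - B (p + 1)) * D p)) := by
          rw [idbd]; exact fsq_add_le _ _
      _ = 2 * e5 p + 2 * e4 p := by rw [fsq_neg, fsq_neg]
      _ ≤ 2 * (mseq p - mseq (p + 1)) := by
          obtain ⟨g1, g2, g3, g4, g5⟩ := e_nonneg p
          have := hdiff_ge p
          linarith
  -- third series
  have h3 : Summable (fun p => fsq (X1 p - X1 (p + 1))) := by
    have : ∀ p, fsq (X1 p - X1 (p + 1)) = ∑ i, ∑ j, ((X1 p - X1 (p + 1)) i j) ^ 2 :=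
      fun p => rfl
    simp only [this]
    apply summable_sum
    intro i _
    apply summable_sum
    intro j _
    have hW := hW1 i j
    have hentry : ∀ p, ((X1 p - X1 (p + 1)) i j) ^ 2 =
        (W1 i j)⁻¹ ^ 2 * (((X1 p - X1 (p + 1)) ⊙ W1) i j) ^ 2 := by
      intro p
      simp only [Matrix.hadamard_apply]
      field_simp
    refine Summable.congr ?_ (fun p => (hentry p).symm)
    apply Summable.mul_left
    refine Summable.of_nonneg_of_le (fun p => sq_nonneg _) (fun p => ?_) h2
    have : ∑ j', (((X1 p - X1 (p + 1)) ⊙ W1) i j') ^ 2 ≤ fsq ((X1 p - X1 (p + 1)) ⊙ W1) := by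
      refine Finset.single_le_sum (f := fun i' => ∑ j', (((X1 p - X1 (p + 1)) ⊙ W1) i' j') ^ 2)
        (fun i' _ => Finset.sum_nonneg fun j' _ => sq_nonneg _) (Finset.mem_univ i)
    refine le_trans ?_ this
    exact Finset.single_le_sum (f := fun j' => (((X1 p - X1 (p + 1)) ⊙ W1) i j') ^ 2)
      (fun j' _ => sq_nonneg _) (Finset.mem_univ j)
  refine ⟨?_, ?_, ?_⟩
  · simpa only [frob_sq] using h1
  · simpa only [frob_sq] using h2
  · simpa only [frob_sq] using h3
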